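/- arXiv:2403.06121 — 6 statements merged into one kernel-verified Lean document; each statement's English description precedes it below -/
import Mathlib

section
/- Let R be a modified Rota-Baxter operator of weight λ on a Lie algebra (T,[·,·]), i.e., [Rx,Ry] = R([Rx,y]+[x,Ry]) + λ[x,y]. Then R is a modified Rota-Baxter operator of weight λ on the induced Lie triple system with bracket [x,y,z] := [[x,y],z]. -/
/-- A modified Rota-Baxter operator of weight `λ` on a Lie algebra is a
modified Rota-Baxter operator of weight `λ` on the induced Lie triple system
`[x,y,z] := [[x,y],z]`. -/
theorem modified_RB_lie_to_lts
    {K T : Type*} [Field K] [LieRing T] [LieAlgebra K T]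
    (R : T →ₗ[K] T) (l : K)
    (hR : ∀ x y : T, ⁅R x, R y⁆ = R (⁅R x, y⁆ + ⁅x, R y⁆) + l • ⁅x, y⁆) :
    ∀ x y z : T,
      ⁅⁅R x, R y⁆, R z⁆ =
        R (⁅⁅R x, R y⁆, z⁆ + ⁅⁅x, R y⁆, R z⁆ + ⁅⁅R x, y⁆, R z⁆ - l • ⁅⁅x, y⁆, z⁆)
          + l • ⁅⁅R x, y⁆, z⁆ + l • ⁅⁅x, R y⁆, z⁆ + l • ⁅⁅x, y⁆, R z⁆ := by
  intro x y z
  have h1 : R (⁅R x, y⁆ + ⁅x, R y⁆) = ⁅R x, R y⁆ - l • ⁅x, y⁆ := by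
    rw [hR x y]; abel
  calc ⁅⁅R x, R y⁆, R z⁆
      = ⁅R (⁅R x, y⁆ + ⁅x, R y⁆) + l • ⁅x, y⁆, R z⁆ := by rw [← hR x y]
    _ = ⁅R (⁅R x, y⁆ + ⁅x, R y⁆), R z⁆ + l • ⁅⁅x, y⁆, R z⁆ := by
        rw [add_lie, smul_lie]
    _ = _ := by
        rw [hR (⁅R x, y⁆ + ⁅x, R y⁆) z, h1]
        simp only [sub_lie, smul_lie, add_lie, lie_add, map_add, map_sub, map_smul,
          smul_add, smul_sub]
        abel
end

section
/- Let (T,[·,·,·]) be a Lie triple system and N: T→T a linear operator with N² = N. Then N is a Nijenhuis operator if and only if N is a Rota-Baxter operator of weight −1. -/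
/-- A Lie triple system: trilinear bracket satisfying the three axioms. -/
def IsLTS {K T : Type*} [Field K] [AddCommGroup T] [Module K T]
    (b : T →ₗ[K] T →ₗ[K] T →ₗ[K] T) : Prop :=
  (∀ x y : T, b x x y = 0) ∧
  (∀ x y z : T, b x y z + b y z x + b z x y = 0) ∧
  (∀ x1 x2 x3 x4 x5 : T, b x1 x2 (b x3 x4 x5) =
    b (b x1 x2 x3) x4 x5 + b x3 (b x1 x2 x4) x5 + b x3 x4 (b x1 x2 x5))

/-- A Nijenhuis operator on a Lie triple system. -/
def IsNijenhuis {K T : Type*} [Field K] [AddCommGroup T] [Module K T]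
    (b : T →ₗ[K] T →ₗ[K] T →ₗ[K] T) (N : T →ₗ[K] T) : Prop :=
  ∀ x y z : T, b (N x) (N y) (N z) =
    N (b (N x) (N y) z + b x (N y) (N z) + b (N x) y (N z)
      - N (b (N x) y z + b x (N y) z + b x y (N z) - N (b x y z)))
/-- If `N² = N`, then `N` is a Nijenhuis operator iff it is a Rota-Baxter
operator of weight −1. -/
theorem nijenhuis_iff_rotaBaxter_of_idempotent
    {K T : Type*} [Field K] [AddCommGroup T] [Module K T]
    (b : T →ₗ[K] T →ₗ[K] T →ₗ[K] T) (h : IsLTS b)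
    (N : T →ₗ[K] T) (hN2 : ∀ x : T, N (N x) = N x) :
    IsNijenhuis b N ↔
      (∀ x y z : T, b (N x) (N y) (N z) =
        N (b (N x) (N y) z + b x (N y) (N z) + b (N x) y (N z)
          - b (N x) y z - b x (N y) z - b x y (N z) + b x y z)) := by
  have key : ∀ x y z : T,
      N (b (N x) (N y) z + b x (N y) (N z) + b (N x) y (N z)
        - N (b (N x) y z + b x (N y) z + b x y (N z) - N (b x y z)))
      = N (b (N x) (N y) z + b x (N y) (N z) + b (N x) y (N z)
        - b (N x) y z - b x (N y) z - b x y (N z) + b x y z) := by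
    intro x y z
    simp only [map_add, map_sub, hN2]
    abel
  constructor
  · intro H x y z; rw [H x y z, key]
  · intro H x y z; rw [H x y z, key]
end

section
/- Let (T,[·,·,·]) be a Lie triple system and N: T→T a linear operator with N² = id. Then N is a Nijenhuis operator if and only if N is a modified Rota-Baxter operator of weight −1, i.e., [Nx,Ny,Nz] = N([Nx,Ny,z]+[x,Ny,Nz]+[Nx,y,Nz]+[x,y,z]) − [Nx,y,z] − [x,Ny,z] − [x,y,Nz]. -/
/-- If `N² = id`, then `N` is a Nijenhuis operator iff it is a modified
Rota-Baxter operator of weight −1. -/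
theorem nijenhuis_iff_modifiedRB_of_involution
    {K T : Type*} [Field K] [AddCommGroup T] [Module K T]
    (b : T →ₗ[K] T →ₗ[K] T →ₗ[K] T) (h : IsLTS b)
    (N : T →ₗ[K] T) (hN2 : ∀ x : T, N (N x) = x) :
    IsNijenhuis b N ↔
      (∀ x y z : T, b (N x) (N y) (N z) =
        N (b (N x) (N y) z + b x (N y) (N z) + b (N x) y (N z) + b x y z)
          - b (N x) y z - b x (N y) z - b x y (N z)) := by
  unfold IsNijenhuis
  constructor <;> intro H x y z <;> rw [H x y z] <;>
    simp only [map_add, map_sub, hN2] <;> abel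
end

section
/- Let (T,[·,·,·]) be a Lie triple system and N: T→T with N² = −id. Then N is a Nijenhuis operator if and only if N is a modified Rota-Baxter operator of weight 1. -/
/-- If `N² = −id`, then `N` is a Nijenhuis operator iff it is a modified
Rota-Baxter operator of weight 1. -/
theorem nijenhuis_iff_modifiedRB_of_antiinvolution
    {K T : Type*} [Field K] [AddCommGroup T] [Module K T]
    (b : T →ₗ[K] T →ₗ[K] T →ₗ[K] T) (h : IsLTS b)
    (N : T →ₗ[K] T) (hN2 : ∀ x : T, N (N x) = -x) :
    IsNijenhuis b N ↔
      (∀ x y z : T, b (N x) (N y) (N z) =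
        N (b (N x) (N y) z + b x (N y) (N z) + b (N x) y (N z) - b x y z)
          + b (N x) y z + b x (N y) z + b x y (N z)) := by
  have key : ∀ A B C : T, N (A - N (B - N C)) = N (A - C) + B := by
    intro A B C
    rw [map_sub, hN2 (B - N C), map_sub]
    abel
  constructor
  · intro H x y z
    rw [H x y z, key]
    abel
  · intro H x y z
    rw [H x y z, key]
    abel
end

section
/- Let (T_N,[·,·,·]) be a Nijenhuis Lie triple system and (V,θ,N_V) a representation of it. Define θ_N(x,y) := θ(Nx,Ny) − N_V∘(θ(Nx,y) + θ(x,Ny) − N_V∘θ(x,y)). Then θ_N satisfies the Nijenhuis-representation compatibility condition: θ_N(Nx,Ny)∘N_V = N_V∘(θ_N(Nx,Ny) + θ_N(Nx,y)∘N_V + θ_N(x,Ny)∘N_V − N_V∘θ_N(Nx,y) − N_V∘θ_N(x,Ny) − N_V∘θ_N(x,y)∘N_V + N_V²∘θ_N(x,y)) for all x,y ∈ T. -/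
/-- A representation of a Lie triple system on `V`. -/
def IsRep {K T V : Type*} [Field K] [AddCommGroup T] [Module K T]
    [AddCommGroup V] [Module K V]
    (b : T →ₗ[K] T →ₗ[K] T →ₗ[K] T) (θ : T →ₗ[K] T →ₗ[K] V →ₗ[K] V) : Prop :=
  ∀ x1 x2 x3 x4 : T,
    ((θ x3 x4) ∘ₗ (θ x1 x2) - (θ x2 x4) ∘ₗ (θ x1 x3) - θ x1 (b x2 x3 x4)
      + (θ x3 x2 - θ x2 x3) ∘ₗ (θ x1 x4) = 0) ∧
    ((θ x3 x4) ∘ₗ (θ x2 x1 - θ x1 x2) - (θ x2 x1 - θ x1 x2) ∘ₗ (θ x3 x4)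
      + θ (b x1 x2 x3) x4 + θ x3 (b x1 x2 x4) = 0)

/-- Compatibility of `N_V` with `θ` and the Nijenhuis operator `N`:
the defining condition of a representation of a Nijenhuis Lie triple system. -/
def NijCompat {K T V : Type*} [Field K] [AddCommGroup T] [Module K T]
    [AddCommGroup V] [Module K V]
    (θ : T →ₗ[K] T →ₗ[K] V →ₗ[K] V) (N : T →ₗ[K] T) (Nv : V →ₗ[K] V) : Prop :=
  ∀ x y : T,
    (θ (N x) (N y)) ∘ₗ Nv =
      Nv ∘ₗ (θ (N x) (N y) + (θ (N x) y) ∘ₗ Nv + (θ x (N y)) ∘ₗ Nv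
        - Nv ∘ₗ (θ (N x) y) - Nv ∘ₗ (θ x (N y))
        - Nv ∘ₗ (θ x y) ∘ₗ Nv + Nv ∘ₗ Nv ∘ₗ (θ x y))


private lemma nij_ring_key {R : Type*} [Ring R] (a p00 p01 p10 p11 p02 p20 p12 p21 p22 : R)
    (e11 : p11*a = a*(p11 + p10*a + p01*a - a*p10 - a*p01 - a*(p00*a) + a*(a*p00)))
    (e21 : p21*a = a*(p21 + p20*a + p11*a - a*p20 - a*p11 - a*(p10*a) + a*(a*p10)))
    (e12 : p12*a = a*(p12 + p11*a + p02*a - a*p11 - a*p02 - a*(p01*a) + a*(a*p01)))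
    (e22 : p22*a = a*(p22 + p21*a + p12*a - a*p21 - a*p12 - a*(p11*a) + a*(a*p11))) :
    (p22 - a*(p21 + p12 - a*p11))*a =
      a*((p22 - a*(p21 + p12 - a*p11)) + (p21 - a*(p20 + p11 - a*p10))*a
        + (p12 - a*(p11 + p02 - a*p01))*a
        - a*(p21 - a*(p20 + p11 - a*p10)) - a*(p12 - a*(p11 + p02 - a*p01))
        - a*((p11 - a*(p10 + p01 - a*p00))*a) + a*(a*(p11 - a*(p10 + p01 - a*p00)))) := by
  have d11 : p11*a - a*(p11 + p10*a + p01*a - a*p10 - a*p01 - a*(p00*a) + a*(a*p00)) = 0 :=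
    sub_eq_zero.mpr e11
  have d21 : p21*a - a*(p21 + p20*a + p11*a - a*p20 - a*p11 - a*(p10*a) + a*(a*p10)) = 0 :=
    sub_eq_zero.mpr e21
  have d12 : p12*a - a*(p12 + p11*a + p02*a - a*p11 - a*p02 - a*(p01*a) + a*(a*p01)) = 0 :=
    sub_eq_zero.mpr e12
  have d22 : p22*a - a*(p22 + p21*a + p12*a - a*p21 - a*p12 - a*(p11*a) + a*(a*p11)) = 0 :=
    sub_eq_zero.mpr e22
  rw [← sub_eq_zero]
  calc (p22 - a*(p21 + p12 - a*p11))*a -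
      a*((p22 - a*(p21 + p12 - a*p11)) + (p21 - a*(p20 + p11 - a*p10))*a
        + (p12 - a*(p11 + p02 - a*p01))*a
        - a*(p21 - a*(p20 + p11 - a*p10)) - a*(p12 - a*(p11 + p02 - a*p01))
        - a*((p11 - a*(p10 + p01 - a*p00))*a) + a*(a*(p11 - a*(p10 + p01 - a*p00))))
      = (p22*a - a*(p22 + p21*a + p12*a - a*p21 - a*p12 - a*(p11*a) + a*(a*p11)))
        - a*(p21*a - a*(p21 + p20*a + p11*a - a*p20 - a*p11 - a*(p10*a) + a*(a*p10)))
        - a*(p12*a - a*(p12 + p11*a + p02*a - a*p11 - a*p02 - a*(p01*a) + a*(a*p01)))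
        + a*(a*(p11*a - a*(p11 + p10*a + p01*a - a*p10 - a*p01 - a*(p00*a) + a*(a*p00)))) := by simp only [mul_add, add_mul, mul_sub, sub_mul, mul_assoc]; abel
    _ = 0 := by rw [d22, d21, d12, d11]; simp

/-- The twisted action `θ_N` again satisfies the Nijenhuis-representation
compatibility condition. -/
theorem thetaN_nijCompat {K T V : Type*} [Field K] [AddCommGroup T] [Module K T]
    [AddCommGroup V] [Module K V]
    (b : T →ₗ[K] T →ₗ[K] T →ₗ[K] T) (θ : T →ₗ[K] T →ₗ[K] V →ₗ[K] V)
    (N : T →ₗ[K] T) (Nv : V →ₗ[K] V)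
    (h : IsLTS b) (hN : IsNijenhuis b N) (hrep : IsRep b θ)
    (hc : NijCompat θ N Nv) :
    let θN : T → T → V →ₗ[K] V := fun x y =>
      θ (N x) (N y) - Nv ∘ₗ (θ (N x) y + θ x (N y) - Nv ∘ₗ θ x y)
    ∀ x y : T,
      (θN (N x) (N y)) ∘ₗ Nv =
        Nv ∘ₗ (θN (N x) (N y) + (θN (N x) y) ∘ₗ Nv + (θN x (N y)) ∘ₗ Nv
          - Nv ∘ₗ (θN (N x) y) - Nv ∘ₗ (θN x (N y))
          - Nv ∘ₗ (θN x y) ∘ₗ Nv + Nv ∘ₗ Nv ∘ₗ (θN x y)) := by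
  intro θN x y
  exact nij_ring_key (R := Module.End K V) Nv (θ x y) (θ x (N y)) (θ (N x) y)
    (θ (N x) (N y)) (θ x (N (N y))) (θ (N (N x)) y) (θ (N x) (N (N y)))
    (θ (N (N x)) (N y)) (θ (N (N x)) (N (N y)))
    (hc x y) (hc (N x) y) (hc x (N y)) (hc (N x) (N y))
end

section
/- Let 0 → V → T̂ → T → 0 be an abelian extension of Nijenhuis Lie triple systems with section s, θ̃(x,y)u := [u,s(x),s(y)]_∧, and N_V := N̂|_V. Then (V, θ̃, N_V) is a representation of the Nijenhuis Lie triple system (T_N,[·,·,·]): in particular θ̃(Nx,Ny)∘N_V = N_V∘(θ̃(Nx,Ny) + θ̃(Nx,y)∘N_V + θ̃(x,Ny)∘N_V − N_V∘θ̃(Nx,y) − N_V∘θ̃(x,Ny) − N_V∘θ̃(x,y)∘N_V + N_V²∘θ̃(x,y)). -/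
/-- For an abelian extension of Nijenhuis Lie triple systems with section `s`,
`(V, θ̃, N_V)` with `θ̃(x,y)u = [u,s(x),s(y)]` and `N_V = N̂|_V` is a
representation of the Nijenhuis Lie triple system `(T_N, [·,·,·])`. -/
theorem abelian_extension_nijenhuis_representation
    {K Th : Type*} [Field K] [AddCommGroup Th] [Module K Th]
    (bh : Th →ₗ[K] Th →ₗ[K] Th →ₗ[K] Th) (hLTS : IsLTS bh)
    (Nh : Th →ₗ[K] Th) (hNij : IsNijenhuis bh Nh)
    (V : Submodule K Th)
    (habelian : ∀ u v t : Th, u ∈ V → v ∈ V →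
      bh u v t = 0 ∧ bh u t v = 0 ∧ bh t u v = 0)
    (hideal : ∀ u x y : Th, u ∈ V →
      bh u x y ∈ V ∧ bh x u y ∈ V ∧ bh x y u ∈ V)
    (hNV : ∀ u : Th, u ∈ V → Nh u ∈ V)
    (s : (Th ⧸ V) →ₗ[K] Th) (hs : ∀ t : Th ⧸ V, V.mkQ (s t) = t)
    (N : (Th ⧸ V) →ₗ[K] (Th ⧸ V)) (hcomm : ∀ t : Th, V.mkQ (Nh t) = N (V.mkQ t)) :
    (let bt : (Th ⧸ V) → (Th ⧸ V) → (Th ⧸ V) → (Th ⧸ V) :=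
       fun x y z => V.mkQ (bh (s x) (s y) (s z))
     let θ : (Th ⧸ V) → (Th ⧸ V) → Th → Th := fun x y u => bh u (s x) (s y)
     let D : (Th ⧸ V) → (Th ⧸ V) → Th → Th := fun x y u => θ y x u - θ x y u
     -- (V, θ̃) is a representation of the Lie triple system T = T̂/V
     (∀ (x1 x2 x3 x4 : Th ⧸ V) (u : Th), u ∈ V →
       (θ x3 x4 (θ x1 x2 u) - θ x2 x4 (θ x1 x3 u) - θ x1 (bt x2 x3 x4) u
         + D x2 x3 (θ x1 x4 u) = 0) ∧
       (θ x3 x4 (D x1 x2 u) - D x1 x2 (θ x3 x4 u) + θ (bt x1 x2 x3) x4 u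
         + θ x3 (bt x1 x2 x4) u = 0)) ∧
     -- Nijenhuis compatibility: θ̃(Nx,Ny)∘N_V = N_V∘(θ̃(Nx,Ny) + ... )
     (∀ (x y : Th ⧸ V) (u : Th), u ∈ V →
       θ (N x) (N y) (Nh u) =
         Nh (θ (N x) (N y) u + θ (N x) y (Nh u) + θ x (N y) (Nh u)
           - Nh (θ (N x) y u) - Nh (θ x (N y) u)
           - Nh (θ x y (Nh u)) + Nh (Nh (θ x y u))))) := by
  
  intro bt θ D
  -- basic facts
  have key : ∀ t : Th, s (V.mkQ t) - t ∈ V := by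
    intro t
    have h : V.mkQ (s (V.mkQ t) - t) = 0 := by rw [map_sub, hs, sub_self]
    rw [Submodule.mkQ_apply] at h
    exact (Submodule.Quotient.mk_eq_zero V).mp h
  have z1 : ∀ u v t : Th, u ∈ V → v ∈ V → bh u v t = 0 :=
    fun u v t hu hv => (habelian u v t hu hv).1
  have z2 : ∀ u v t : Th, u ∈ V → v ∈ V → bh u t v = 0 :=
    fun u v t hu hv => (habelian u v t hu hv).2.1
  have expand1 : ∀ p q r c : Th, bh (p + q) r c = bh p r c + bh q r c := by
    intro p q r c; rw [map_add]; rfl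
  have expand2 : ∀ p q r c : Th, bh p (q + r) c = bh p q c + bh p r c := by
    intro p q r c; rw [map_add]; rfl
  have expand3 : ∀ p c q r : Th, bh p c (q + r) = bh p c q + bh p c r := by
    intro p c q r; rw [map_add]
  have L1 : ∀ (u t c : Th), u ∈ V → bh u (s (V.mkQ t)) c = bh u t c := by
    intro u t c hu
    have h1 : s (V.mkQ t) = t + (s (V.mkQ t) - t) := by abel
    rw [h1, expand2, z1 u _ c hu (key t), add_zero]
  have L2 : ∀ (u t c : Th), u ∈ V → bh u c (s (V.mkQ t)) = bh u c t := by
    intro u t c hu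
    have h1 : s (V.mkQ t) = t + (s (V.mkQ t) - t) := by abel
    rw [h1, expand3, z2 u _ c hu (key t), add_zero]
  have sk : ∀ x y z : Th, bh x y z = - bh y x z := by
    intro x y z
    have h : bh (x + y) (x + y) z = 0 := hLTS.1 _ _
    rw [expand1, expand2, expand2, hLTS.1, hLTS.1] at h
    linear_combination (norm := abel) h
  have Dlem : ∀ x y z : Th, bh z y x - bh z x y = bh x y z := by
    intro x y z
    have h := hLTS.2.1 z y x
    rw [sk y x z, sk x z y] at h
    linear_combination (norm := abel) h
  constructor
  · -- representation of the Lie triple system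
    intro x1 x2 x3 x4 u hu
    set a1 := s x1; set a2 := s x2; set a3 := s x3; set a4 := s x4
    constructor
    · show bh (bh u a1 a2) a3 a4 - bh (bh u a1 a3) a2 a4
        - bh u a1 (s (V.mkQ (bh a2 a3 a4)))
        + (bh (bh u a1 a4) a3 a2 - bh (bh u a1 a4) a2 a3) = 0
      rw [L2 u (bh a2 a3 a4) a1 hu]
      have hJ := hLTS.2.2 u a1 a2 a3 a4
      have h2 : bh a2 (bh u a1 a3) a4 = - bh (bh u a1 a3) a2 a4 :=
        sk a2 (bh u a1 a3) a4
      have h3 : bh (bh u a1 a4) a3 a2 - bh (bh u a1 a4) a2 a3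
          = bh a2 a3 (bh u a1 a4) := Dlem a2 a3 (bh u a1 a4)
      linear_combination (norm := abel) -hJ - h2 + h3
    · show bh (bh u a2 a1 - bh u a1 a2) a3 a4
        - (bh (bh u a3 a4) a2 a1 - bh (bh u a3 a4) a1 a2)
        + bh u (s (V.mkQ (bh a1 a2 a3))) a4
        + bh u a3 (s (V.mkQ (bh a1 a2 a4))) = 0
      rw [L1 u (bh a1 a2 a3) a4 hu, L2 u (bh a1 a2 a4) a3 hu]
      have h1 : bh (bh u a2 a1 - bh u a1 a2) a3 a4 = bh (bh a1 a2 u) a3 a4 := by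
        rw [Dlem a1 a2 u]
      have h2 : bh (bh u a3 a4) a2 a1 - bh (bh u a3 a4) a1 a2
          = bh a1 a2 (bh u a3 a4) := Dlem a1 a2 (bh u a3 a4)
      have hJ := hLTS.2.2 a1 a2 u a3 a4
      linear_combination (norm := abel) h1 - h2 - hJ
  · -- Nijenhuis compatibility
    intro x y u hu
    set a := s x with ha
    set b := s y with hb
    have hNu : Nh u ∈ V := hNV u hu
    have hNx : s (N x) = s (V.mkQ (Nh a)) := by rw [hcomm, hs]
    have hNy : s (N y) = s (V.mkQ (Nh b)) := by rw [hcomm, hs]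
    have E1 : ∀ (w : Th), w ∈ V → ∀ c : Th, bh w (s (N x)) c = bh w (Nh a) c := by
      intro w hw c; rw [hNx, L1 w (Nh a) c hw]
    have E2 : ∀ (w : Th), w ∈ V → ∀ c : Th, bh w c (s (N y)) = bh w c (Nh b) := by
      intro w hw c; rw [hNy, L2 w (Nh b) c hw]
    show bh (Nh u) (s (N x)) (s (N y)) =
      Nh (bh u (s (N x)) (s (N y)) + bh (Nh u) (s (N x)) b + bh (Nh u) a (s (N y))
        - Nh (bh u (s (N x)) b) - Nh (bh u a (s (N y)))
        - Nh (bh (Nh u) a b) + Nh (Nh (bh u a b)))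
    simp only [E1 (Nh u) hNu, E2 (Nh u) hNu, E1 u hu, E2 u hu]
    rw [hNij u a b]
    congr 1
    simp only [map_add, map_sub]
    abel
end
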